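/- Define b₀ = (c₁c₂⋯c_{2h}) · c_{2h+1} · (c₁c₂⋯c_{2h})⁻¹ and ι = (c₁c₂⋯c_{2h+1}) · (c_{2h+1}c_{2h}⋯c₂c₁), and suppose that ι commutes with each c_j for 1 ≤ j ≤ 2h+1 and that ι² = 1. Then for every integer m with 1 ≤ m ≤ h−1, the positive word (c_{2m+2}c_{2m+3}⋯c_{2h}c_{2h+1}) · (c_{2m}c_{2m−1}⋯c₂c₁) · b₀ · (c_{2h+1}c_{2h}⋯c_{2m+2}) · (c₁c₂⋯c_{2m}) · c_{2m+1} equals ι. (This is the positive Dehn twist expression for the hyperelliptic involution obtained from the involution θ of the simple-case theorem by setting the vertical genus k = 0.) -/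

import Mathlib

/-!
Write `Δ = c₁ ⋯ c_{2h+1}`. The braid and commutation relations give `Δ c_j Δ⁻¹ = c_{j+1}` for
`j ≤ 2h`, so pushing `Δ` to the right through `c_{2h} ⋯ c_{2m+1}` yields
`Δ (c_{2h} ⋯ c₁) = X U L` with `X = (c_{2h+1} ⋯ c_{2m+2})(c₁ ⋯ c_{2m+1})`,
`U = c_{2m+2} ⋯ c_{2h+1}` and `L = c_{2m} ⋯ c₁`. Since `ι = Δ c_{2h+1} (c_{2h} ⋯ c₁)`, we have
`b₀ = ι (Δ (c_{2h} ⋯ c₁))⁻¹ = ι (X U L)⁻¹`, so the word is `U L ι (X U L)⁻¹ X = (U L) ι (U L)⁻¹`,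
which is `ι` because `ι` commutes with every `c_j`.
-/

/-- The ascending product `c a * c (a+1) * ⋯ * c b`. -/
def ascProd {G : Type*} [Group G] (c : ℕ → G) (a b : ℕ) : G :=
  ((List.range' a (b + 1 - a)).map c).prod

/-- The descending product `c b * c (b-1) * ⋯ * c a`. -/
def descProd {G : Type*} [Group G] (c : ℕ → G) (a b : ℕ) : G :=
  (((List.range' a (b + 1 - a)).reverse).map c).prod

section Products

variable {G : Type*} [Group G] (c : ℕ → G)

theorem List.range'_eq_append_of_le {a k b : ℕ} (hak : a ≤ k + 1) (hkb : k ≤ b) :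
    List.range' a (b + 1 - a) =
      List.range' a (k + 1 - a) ++ List.range' (k + 1) (b + 1 - (k + 1)) := by
  have h := List.range'_append_1 (s := a) (m := k + 1 - a) (n := b + 1 - (k + 1))
  rwa [show a + (k + 1 - a) = k + 1 by omega,
    show k + 1 - a + (b + 1 - (k + 1)) = b + 1 - a by omega, eq_comm] at h

theorem ascProd_mul_ascProd {a k b : ℕ} (hak : a ≤ k + 1) (hkb : k ≤ b) :
    ascProd c a k * ascProd c (k + 1) b = ascProd c a b := by
  rw [ascProd, ascProd, ascProd, List.range'_eq_append_of_le hak hkb, List.map_append,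
    List.prod_append]

theorem descProd_mul_descProd {a k b : ℕ} (hak : a ≤ k + 1) (hkb : k ≤ b) :
    descProd c (k + 1) b * descProd c a k = descProd c a b := by
  rw [descProd, descProd, descProd, List.range'_eq_append_of_le hak hkb, List.reverse_append,
    List.map_append, List.prod_append]

@[simp]
theorem ascProd_self (a : ℕ) : ascProd c a a = c a := by
  simp [ascProd]

@[simp]
theorem descProd_self (a : ℕ) : descProd c a a = c a := by
  simp [descProd]

theorem ascProd_succ {a b : ℕ} (hab : a ≤ b + 1) :
    ascProd c a (b + 1) = ascProd c a b * c (b + 1) := by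
  rw [← ascProd_mul_ascProd c hab le_self_add, ascProd_self]

theorem descProd_succ {a b : ℕ} (hab : a ≤ b + 1) :
    descProd c a (b + 1) = c (b + 1) * descProd c a b := by
  rw [← descProd_mul_descProd c hab le_self_add, descProd_self]

theorem Commute.ascProd_right {x : G} {a b : ℕ} (H : ∀ j, a ≤ j → j ≤ b → Commute x (c j)) :
    Commute x (ascProd c a b) := by
  refine Commute.list_prod_right _ _ fun y hy ↦ ?_
  obtain ⟨j, hj, rfl⟩ := List.mem_map.1 hy
  rw [List.mem_range'_1] at hj
  exact H j hj.1 (by omega)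

theorem Commute.descProd_right {x : G} {a b : ℕ} (H : ∀ j, a ≤ j → j ≤ b → Commute x (c j)) :
    Commute x (descProd c a b) := by
  refine Commute.list_prod_right _ _ fun y hy ↦ ?_
  obtain ⟨j, hj, rfl⟩ := List.mem_map.1 hy
  rw [List.mem_reverse, List.mem_range'_1] at hj
  exact H j hj.1 (by omega)

theorem SemiconjBy.list_map_prod {α : Type*} {g : G} {d e : α → G} :
    ∀ {l : List α}, (∀ i ∈ l, SemiconjBy g (d i) (e i)) →
      SemiconjBy g (l.map d).prod (l.map e).prod
  | [], _ => by simp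
  | i :: l, H => by
    simpa using (H i List.mem_cons_self).mul_right
      (SemiconjBy.list_map_prod fun j hj ↦ H j (List.mem_cons_of_mem i hj))

theorem SemiconjBy.descProd_succ {g : G} {a b : ℕ}
    (H : ∀ j, a ≤ j → j ≤ b → SemiconjBy g (c j) (c (j + 1))) :
    SemiconjBy g (descProd c a b) (descProd c (a + 1) (b + 1)) := by
  rw [descProd, descProd, show b + 1 + 1 - (a + 1) = b + 1 - a by omega, List.range'_succ_left,
    ← List.map_reverse, List.map_map]
  refine SemiconjBy.list_map_prod fun j hj ↦ ?_
  rw [List.mem_reverse, List.mem_range'_1] at hj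
  exact H j hj.1 (by omega)

end Products

/-- The relations among the Dehn twists about a chain of `n` curves, indexed from `1`. -/
structure ChainRelations {G : Type*} [Group G] (c : ℕ → G) (n : ℕ) : Prop where
  braid : ∀ j, 1 ≤ j → j < n → c j * c (j + 1) * c j = c (j + 1) * c j * c (j + 1)
  comm : ∀ j l, 1 ≤ j → j + 2 ≤ l → l ≤ n → Commute (c j) (c l)

namespace ChainRelations

variable {G : Type*} [Group G] {c : ℕ → G} {n : ℕ}

theorem semiconjBy_ascProd (hc : ChainRelations c n) {j : ℕ} (hj : 1 ≤ j) (hjn : j < n) :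
    SemiconjBy (ascProd c 1 n) (c j) (c (j + 1)) := by
  obtain ⟨i, rfl⟩ : ∃ i, j = i + 1 := ⟨j - 1, by omega⟩
  have hsplit :
      ascProd c 1 n = ascProd c 1 i * (c (i + 1) * c (i + 2)) * ascProd c (i + 3) n := by
    rw [← ascProd_mul_ascProd c (k := i + 2) (by omega) (by omega),
      ← ascProd_mul_ascProd c (k := i) (b := i + 2) (by omega) (by omega),
      ascProd_succ c (by omega), ascProd_self, mul_assoc (ascProd c 1 i)]
  have hright : Commute (c (i + 1)) (ascProd c (i + 3) n) :=
    Commute.ascProd_right c fun l hl hln ↦ hc.comm _ _ (by omega) (by omega) hln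
  have hleft : Commute (c (i + 2)) (ascProd c 1 i) :=
    Commute.ascProd_right c fun l hl hli ↦ (hc.comm _ _ hl (by omega) (by omega)).symm
  have hbraid : c (i + 1) * c (i + 2) * c (i + 1) = c (i + 2) * c (i + 1) * c (i + 2) :=
    hc.braid (i + 1) hj hjn
  unfold SemiconjBy
  rw [hsplit]
  calc ascProd c 1 i * (c (i + 1) * c (i + 2)) * ascProd c (i + 3) n * c (i + 1)
      = ascProd c 1 i * (c (i + 1) * c (i + 2) * c (i + 1)) * ascProd c (i + 3) n := by
        rw [mul_assoc _ (ascProd c (i + 3) n), ← hright.eq]; simp only [mul_assoc]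
    _ = ascProd c 1 i * c (i + 2) * (c (i + 1) * c (i + 2)) * ascProd c (i + 3) n := by
        rw [hbraid]; simp only [mul_assoc]
    _ = c (i + 2) * (ascProd c 1 i * (c (i + 1) * c (i + 2)) * ascProd c (i + 3) n) := by
        rw [← hleft.eq]; simp only [mul_assoc]

theorem ascProd_mul_descProd (hc : ChainRelations c n) {a b : ℕ} (ha : 1 ≤ a) (hbn : b < n) :
    ascProd c 1 n * descProd c a b = descProd c (a + 1) (b + 1) * ascProd c 1 n :=
  SemiconjBy.descProd_succ c fun j hj hjb ↦ hc.semiconjBy_ascProd (by omega) (by omega)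

theorem ascProd_mul_descProd_split (hc : ChainRelations c (n + 1)) {k : ℕ} (hkn : k ≤ n) :
    ascProd c 1 (n + 1) * descProd c 1 n =
      descProd c (k + 2) (n + 1) * ascProd c 1 (k + 1) * (ascProd c (k + 2) (n + 1) *
        descProd c 1 k) := by
  rw [← descProd_mul_descProd c (k := k) (by omega) hkn, ← mul_assoc,
    hc.ascProd_mul_descProd (by omega) (by omega),
    ← ascProd_mul_ascProd c (a := 1) (k := k + 1) (by omega) (by omega)]
  simp only [mul_assoc]

end ChainRelations

theorem stmt5_general {G : Type*} [Group G] (h : ℕ) (c : ℕ → G)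
    (braid : ∀ j, 1 ≤ j → j ≤ 2 * h → c j * c (j + 1) * c j = c (j + 1) * c j * c (j + 1))
    (comm : ∀ j l, 1 ≤ j → j ≤ 2 * h + 1 → 1 ≤ l → l ≤ 2 * h + 1 →
      (j + 2 ≤ l ∨ l + 2 ≤ j) → c j * c l = c l * c j)
    (b₀ : G) (hb₀ : b₀ = ascProd c 1 (2 * h) * c (2 * h + 1) * (ascProd c 1 (2 * h))⁻¹)
    (ι : G) (hι : ι = ascProd c 1 (2 * h + 1) * descProd c 1 (2 * h + 1))
    (hcomm : ∀ j, 1 ≤ j → j ≤ 2 * h + 1 → ι * c j = c j * ι) :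
    ∀ m, 1 ≤ m → m ≤ h - 1 →
      ascProd c (2 * m + 2) (2 * h + 1) * descProd c 1 (2 * m) * b₀ *
          descProd c (2 * m + 2) (2 * h + 1) * ascProd c 1 (2 * m) * c (2 * m + 1) = ι := by
  intro m hm1 hm2
  have hc : ChainRelations c (2 * h + 1) :=
    ⟨fun j hj hjn ↦ braid j hj (by omega),
      fun j l hj hjl hl ↦ comm j l hj (by omega) (by omega) hl (Or.inl hjl)⟩
  have hb : b₀ = ι * (ascProd c 1 (2 * h + 1) * descProd c 1 (2 * h))⁻¹ := by
    rw [hb₀, hι, ascProd_succ c (by omega), descProd_succ c (by omega)]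
    group
  have hUL : Commute ι (ascProd c (2 * m + 2) (2 * h + 1) * descProd c 1 (2 * m)) :=
    (Commute.ascProd_right c fun j _ hj ↦ hcomm j (by omega) hj).mul_right
      (Commute.descProd_right c fun j hj _ ↦ hcomm j hj (by omega))
  rw [hb, hc.ascProd_mul_descProd_split (k := 2 * m) (by omega),
    ascProd_succ c (b := 2 * m) (by omega)]
  set UL := ascProd c (2 * m + 2) (2 * h + 1) * descProd c 1 (2 * m)
  set X := descProd c (2 * m + 2) (2 * h + 1) * (ascProd c 1 (2 * m) * c (2 * m + 1))
  calc UL * (ι * (X * UL)⁻¹) * descProd c (2 * m + 2) (2 * h + 1) * ascProd c 1 (2 * m) *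
        c (2 * m + 1)
      = UL * ι * UL⁻¹ := by simp only [X]; group
    _ = ι := by rw [← hUL.eq, mul_inv_cancel_right]

/-- with `b₀ = (c₁⋯c_{2h}) c_{2h+1} (c₁⋯c_{2h})⁻¹` and
`ι = (c₁⋯c_{2h+1})(c_{2h+1}⋯c₁)` (which commutes with each `c_j` and satisfies `ι² = 1`),
for `1 ≤ m ≤ h-1` the positive word
`(c_{2m+2}⋯c_{2h+1})(c_{2m}⋯c₁) b₀ (c_{2h+1}⋯c_{2m+2})(c₁⋯c_{2m}) c_{2m+1}` equals `ι`. -/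
theorem stmt5 {G : Type*} [Group G] (h : ℕ) (hh : 2 ≤ h) (c : ℕ → G)
    (braid : ∀ j, 1 ≤ j → j ≤ 2 * h → c j * c (j + 1) * c j = c (j + 1) * c j * c (j + 1))
    (comm : ∀ j l, 1 ≤ j → j ≤ 2 * h + 1 → 1 ≤ l → l ≤ 2 * h + 1 →
      (j + 2 ≤ l ∨ l + 2 ≤ j) → c j * c l = c l * c j)
    (b₀ : G) (hb₀ : b₀ = ascProd c 1 (2 * h) * c (2 * h + 1) * (ascProd c 1 (2 * h))⁻¹)
    (ι : G) (hι : ι = ascProd c 1 (2 * h + 1) * descProd c 1 (2 * h + 1))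
    (hcomm : ∀ j, 1 ≤ j → j ≤ 2 * h + 1 → ι * c j = c j * ι)
    (hsq : ι ^ 2 = 1) :
    ∀ m, 1 ≤ m → m ≤ h - 1 →
      ascProd c (2 * m + 2) (2 * h + 1) * descProd c 1 (2 * m) * b₀ *
          descProd c (2 * m + 2) (2 * h + 1) * ascProd c 1 (2 * m) * c (2 * m + 1) = ι :=
  stmt5_general h c braid comm b₀ hb₀ ι hι hcomm
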